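/- Let G = ⟨a⟩ ≅ Z_{2^n} with n ≥ 3 and let Hol(G) = G_R ⋊ Aut(G). A cyclic regular subgroup R of Hol(G) of the form R = ⟨a y^{2^t}⟩ with 0 ≤ t ≤ n-3 is normal in Hol(G) if and only if t = n-3. Moreover R ∩ G_R = ⟨a^{2^{n-2-t}}⟩. -/
import Mathlib

open Finset

/-- The element `a^b x^?y^?` of the holomorph of `ZMod N`, viewed as the permutation
`g ↦ (g + b) * u` of `ZMod N`. -/
def aff (N : ℕ) (u : (ZMod N)ˣ) (b : ZMod N) : Equiv.Perm (ZMod N) :=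
  (Equiv.addRight b).trans (Units.mulRight u)

/-- The automorphism `y : a ↦ a^5` of `ZMod (2^n)` as a unit. -/
def u5 (n : ℕ) : (ZMod (2 ^ n))ˣ :=
  ZMod.unitOfCoprime 5 (Nat.Coprime.pow_right n (by decide))

/-- A permutation is semiregular if every power of it fixing a point is the identity. -/
def Semiregular {α : Type*} (σ : Equiv.Perm α) : Prop :=
  ∀ (k : ℤ) (g : α), (σ ^ k) g = g → σ ^ k = 1

lemma aff_apply (N : ℕ) (u : (ZMod N)ˣ) (b g : ZMod N) :
    aff N u b g = (g + b) * u := rfl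

lemma aff_mul (N : ℕ) (u v : (ZMod N)ˣ) (b c : ZMod N) :
    aff N u b * aff N v c = aff N (u * v) (c + b * ↑v⁻¹) := by
  ext g
  simp only [Equiv.Perm.mul_apply, aff_apply, Units.val_mul]
  linear_combination (-(b : ZMod N)) * (u : ZMod N) * v.inv_mul

lemma aff_one (N : ℕ) : aff N 1 0 = 1 := by
  ext g; simp [aff_apply]

lemma aff_inj {N : ℕ} {u v : (ZMod N)ˣ} {b c : ZMod N}
    (h : aff N u b = aff N v c) : u = v ∧ b = c := by
  have h0 := DFunLike.congr_fun h 0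
  have h1 := DFunLike.congr_fun h 1
  simp only [aff_apply, zero_add, one_mul] at h0 h1
  have huv : (u : ZMod N) = v := by linear_combination h1 - h0
  have huv' : u = v := Units.ext huv
  subst huv'
  exact ⟨rfl, (Units.mul_left_inj u).mp h0⟩

lemma aff_inv (N : ℕ) (u : (ZMod N)ˣ) (b : ZMod N) :
    (aff N u b)⁻¹ = aff N u⁻¹ (-(b * u)) := by
  symm
  rw [eq_inv_iff_mul_eq_one, aff_mul]
  simp [aff_one]

lemma aff_pow (N : ℕ) (u : (ZMod N)ˣ) (b : ZMod N) (k : ℕ) :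
    (aff N u b) ^ k = aff N (u ^ k) (b * ∑ i ∈ Finset.range k, (↑(u⁻¹) : ZMod N) ^ i) := by
  induction k with
  | zero => simp [aff_one]
  | succ k ih =>
      rw [pow_succ, ih, aff_mul, geom_sum_succ]
      congr 1
      · rw [pow_succ]
      · ring

lemma tr_mul (N : ℕ) (b c : ZMod N) :
    aff N 1 b * aff N 1 c = aff N 1 (b + c) := by
  rw [aff_mul]; congr 1
  · rw [one_mul]
  · simp; ring

/-- translations as a monoid hom -/
def trHom (N : ℕ) : Multiplicative (ZMod N) →* Equiv.Perm (ZMod N) where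
  toFun b := aff N 1 b.toAdd
  map_one' := aff_one N
  map_mul' x y := by
    simp only [toAdd_mul]
    rw [← tr_mul]

lemma tr_pow (N : ℕ) (b : ZMod N) (k : ℕ) :
    (aff N 1 b) ^ k = aff N 1 (k • b) := by
  have h : aff N 1 b = trHom N (Multiplicative.ofAdd b) := rfl
  rw [h, ← map_pow]
  rfl

lemma tr_zpow (N : ℕ) (b : ZMod N) (z : ℤ) :
    (aff N 1 b) ^ z = aff N 1 (z • b) := by
  have h : aff N 1 b = trHom N (Multiplicative.ofAdd b) := rfl
  rw [h, ← map_zpow]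
  rfl

lemma mem_zpowers_iff_nat {G : Type*} [Group G] [Finite G] {g x : G} :
    x ∈ Subgroup.zpowers g ↔ ∃ k : ℕ, g ^ k = x := by
  rw [← mem_powers_iff_mem_zpowers, Submonoid.mem_powers_iff]

lemma five_two_pow (s : ℕ) : ∃ d : ℤ, Odd d ∧ (5:ℤ)^(2^s) = 1 + 2^(s+2) * d := by
  induction s with
  | zero => exact ⟨1, odd_one, by norm_num⟩
  | succ s ih =>
      obtain ⟨d, hd, h⟩ := ih
      refine ⟨d + 2^(s+1)*d^2, ?_, ?_⟩
      · refine hd.add_even (Even.mul_right ?_ _)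
        rw [pow_succ]; exact even_two.mul_left _
      · have h2 : (5:ℤ)^(2^(s+1)) = ((5:ℤ)^(2^s))^2 := by
          rw [← pow_mul, pow_succ]
        rw [h2, h]; ring

lemma odd_isCoprime_two_pow {g : ℤ} (hg : Odd g) (j : ℕ) : IsCoprime ((2:ℤ)^j) g := by
  obtain ⟨m, rfl⟩ := hg
  exact IsCoprime.pow_left ⟨-m, 1, by ring⟩

lemma geom_sum_val (t a : ℕ) :
    ∃ f : ℤ, Odd f ∧ (∑ i ∈ range (2^a), ((5:ℤ)^(2^t))^i) = 2^a * f := by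
  obtain ⟨d, hd, hdeq⟩ := five_two_pow t
  obtain ⟨e, he, heeq⟩ := five_two_pow (t + a)
  have hgeom : (∑ i ∈ range (2^a), ((5:ℤ)^(2^t))^i) * ((5:ℤ)^(2^t) - 1)
      = (5:ℤ)^(2^(t+a)) - 1 := by
    rw [geom_sum_mul, ← pow_mul, ← pow_add]
  have hcancel : (∑ i ∈ range (2^a), ((5:ℤ)^(2^t))^i) * d = 2^a * e := by
    have h2 : ((2:ℤ)^(t+2)) ≠ 0 := by positivity
    apply mul_left_cancel₀ h2
    linear_combination hgeom - (∑ i ∈ range (2^a), ((5:ℤ)^(2^t))^i) * hdeq + heeq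
  have hdvd : (2:ℤ)^a ∣ (∑ i ∈ range (2^a), ((5:ℤ)^(2^t))^i) := by
    have h1 : (2:ℤ)^a ∣ (∑ i ∈ range (2^a), ((5:ℤ)^(2^t))^i) * d :=
      Dvd.intro e hcancel.symm
    exact (odd_isCoprime_two_pow hd a).dvd_of_dvd_mul_right h1
  obtain ⟨f, hf⟩ := hdvd
  refine ⟨f, ?_, hf⟩
  have hfd : f * d = e := by
    apply mul_left_cancel₀ (pow_ne_zero a (two_ne_zero (α := ℤ)))
    rw [← mul_assoc, ← hf, hcancel]
  have : Odd (f * d) := hfd ▸ he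
  exact (Int.odd_mul.mp this).1

lemma unit_odd {n : ℕ} (hn : 1 ≤ n) (x : (ZMod (2^n))ˣ) :
    ∃ y : ZMod (2^n), (x : ZMod (2^n)) = 1 + 2*y := by
  have hco := ZMod.val_coe_unit_coprime x
  have hodd : ¬ 2 ∣ (x : ZMod (2^n)).val := by
    intro h2
    have h2' : 2 ∣ 2^n := dvd_pow_self 2 (by omega)
    have := Nat.dvd_gcd h2 h2'
    rw [hco] at this
    omega
  obtain ⟨q, hq⟩ := Nat.odd_iff.mpr (Nat.two_dvd_ne_zero.mp hodd)
  haveI : NeZero (2^n) := ⟨pow_ne_zero n (by norm_num)⟩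
  refine ⟨(q : ZMod (2^n)), ?_⟩
  have hx : ((x : ZMod (2^n)).val : ZMod (2^n)) = (x : ZMod (2^n)) := by
    rw [ZMod.natCast_val, ZMod.cast_id]
  rw [← hx, hq]
  push_cast
  ring

/-- A cyclic regular subgroup `R = ⟨a y^{2^t}⟩` of `Hol(Z_{2^n})` (`n ≥ 3`,
`0 ≤ t ≤ n-3`) is normal in `Hol(Z_{2^n})` iff `t = n-3`; moreover
`R ∩ G_R = ⟨a^{2^{n-2-t}}⟩`, where `G_R = ⟨a⟩` is the group of right translations. -/
theorem cyclic_regular_normal_iff (n : ℕ) (hn : 3 ≤ n) (t : ℕ) (ht : t ≤ n - 3)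
    (Hol R GR : Subgroup (Equiv.Perm (ZMod (2 ^ n))))
    (hHol : Hol = Subgroup.closure
      (Set.range fun p : (ZMod (2 ^ n))ˣ × ZMod (2 ^ n) => aff (2 ^ n) p.1 p.2))
    (hR : R = Subgroup.zpowers (aff (2 ^ n) (u5 n ^ 2 ^ t) 1))
    (hGR : GR = Subgroup.zpowers (aff (2 ^ n) 1 1)) :
    ((∀ h ∈ Hol, ∀ r ∈ R, h * r * h⁻¹ ∈ R) ↔ t = n - 3) ∧
    R ⊓ GR = Subgroup.zpowers (aff (2 ^ n) 1 ((2 ^ (n - 2 - t) : ℕ) : ZMod (2 ^ n))) := by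
  subst hHol hR hGR
  haveI : NeZero (2^n) := ⟨pow_ne_zero n (by norm_num)⟩
  haveI : Fact (Nat.Prime 2) := ⟨Nat.prime_two⟩
  have hta : t + 2 + (n - 2 - t) = n := by omega
  have ha1 : 1 ≤ n - 2 - t := by omega
  obtain ⟨f, hf, hfeq⟩ := geom_sum_val t (n - 2 - t)
  set g : ℤ := 5^(2^t) * f with hg
  have hgodd : Odd g := by
    rw [hg]
    refine Int.odd_mul.mpr ⟨?_, hf⟩
    exact Odd.pow ⟨2, by norm_num⟩
  set w : (ZMod (2^n))ˣ := u5 n ^ 2^t with hw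
  have hwv : (w : ZMod (2^n)) = (5 : ZMod (2^n))^(2^t) := by
    rw [hw, Units.val_pow_eq_pow_val, u5, ZMod.coe_unitOfCoprime]
    push_cast
    rfl
  have hcast0 : ((2:ZMod (2^n)))^n = 0 := by
    have h := ZMod.natCast_self (2^n)
    push_cast at h
    exact h
  have hwm : w ^ (2^(n-2-t)) = 1 := by
    obtain ⟨e, he, heeq⟩ := five_two_pow (t + (n - 2 - t))
    have hint : ((5:ℤ)^(2^t))^(2^(n-2-t)) = 1 + 2^n * e := by
      rw [← pow_mul, ← pow_add, heeq, show t + (n - 2 - t) + 2 = n from by omega]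
    have hc := congrArg (fun z : ℤ => (z : ZMod (2^n))) hint
    push_cast at hc
    apply Units.ext
    rw [Units.val_pow_eq_pow_val, hwv, Units.val_one, hc, hcast0]
    ring
  have horder : orderOf w = 2^(n-2-t) := by
    have h2 : w ^ 2^((n-2-t-1)+1) = 1 := by
      rw [show (n-2-t-1)+1 = n-2-t from by omega]; exact hwm
    have h1 : ¬ w ^ 2^(n-2-t-1) = 1 := by
      intro hcon
      obtain ⟨e, he, heeq⟩ := five_two_pow (t + (n - 2 - t - 1))
      have hint : ((5:ℤ)^(2^t))^(2^(n-2-t-1)) = 1 + 2^(n-1) * e := by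
        rw [← pow_mul, ← pow_add, heeq, show t + (n - 2 - t - 1) + 2 = n - 1 from by omega]
      have hc := congrArg (fun z : ℤ => (z : ZMod (2^n))) hint
      push_cast at hc
      have hval := congrArg Units.val hcon
      rw [Units.val_pow_eq_pow_val, hwv, Units.val_one, hc] at hval
      have h0 : (((2:ℤ)^(n-1) * e : ℤ) : ZMod (2^n)) = 0 := by
        push_cast
        linear_combination hval
      have hdvd := (ZMod.intCast_zmod_eq_zero_iff_dvd _ (2^n)).mp h0
      have hdvd' : ((2:ℤ)^(n-1) * 2) ∣ 2^(n-1) * e := by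
        have hnn : ((2^n : ℕ) : ℤ) = 2^(n-1) * 2 := by
          push_cast
          rw [← pow_succ, show n-1+1 = n from by omega]
        rwa [hnn] at hdvd
      have h2d : (2:ℤ) ∣ e :=
        (mul_dvd_mul_iff_left (pow_ne_zero (n-1) (two_ne_zero (α := ℤ)))).mp hdvd'
      obtain ⟨m, hm⟩ := he
      omega
    have := orderOf_eq_prime_pow h1 h2
    rwa [show (n-2-t-1)+1 = n-2-t from by omega] at this
  have hSsum : (∑ i ∈ Finset.range (2^(n-2-t)), ((↑(w⁻¹) : ZMod (2^n)))^i)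
      = ((2^(n-2-t) * g : ℤ) : ZMod (2^n)) := by
    rw [← Finset.sum_range_reflect (fun i => ((↑(w⁻¹) : ZMod (2^n)))^i) (2^(n-2-t))]
    have hterm : ∀ i ∈ Finset.range (2^(n-2-t)),
        ((↑(w⁻¹) : ZMod (2^n)))^(2^(n-2-t)-1-i) = ((w : ZMod (2^n)))^(i+1) := by
      intro i hi
      have hiu : w⁻¹ ^ (2^(n-2-t)-1-i) = w^(i+1) := by
        rw [inv_pow, inv_eq_iff_mul_eq_one, ← pow_add,
          show (2^(n-2-t)-1-i) + (i+1) = 2^(n-2-t) from by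
            (have := Finset.mem_range.mp hi; omega)]
        exact hwm
      rw [← Units.val_pow_eq_pow_val, hiu, Units.val_pow_eq_pow_val]
    rw [Finset.sum_congr rfl hterm]
    simp_rw [pow_succ']
    rw [← Finset.mul_sum, hwv]
    have hfc := congrArg (fun z : ℤ => (z : ZMod (2^n))) hfeq
    push_cast at hfc
    rw [hfc, hg]
    push_cast
    ring
  have hpow : ∀ k : ℕ, (aff (2^n) w 1)^k
      = aff (2^n) (w^k) (∑ i ∈ Finset.range k, ((↑(w⁻¹) : ZMod (2^n)))^i) := by
    intro k; rw [aff_pow, one_mul]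
  have hr2a : (aff (2^n) w 1)^(2^(n-2-t)) = aff (2^n) 1 ((2^(n-2-t) * g : ℤ) : ZMod (2^n)) := by
    rw [hpow, hwm, hSsum]
  have hsplit : ((2:ℤ)^n) = 2^(t+2) * 2^(n-2-t) := by
    rw [← pow_add, hta]
  -- Part 2 : the intersection
  have hpart2 : Subgroup.zpowers (aff (2^n) w 1) ⊓ Subgroup.zpowers (aff (2^n) 1 1)
      = Subgroup.zpowers (aff (2^n) 1 ((2 ^ (n - 2 - t) : ℕ) : ZMod (2 ^ n))) := by
    apply le_antisymm
    · rintro x ⟨hxR, hxG⟩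
      obtain ⟨k, rfl⟩ := mem_zpowers_iff_nat.mp hxR
      obtain ⟨j, hj⟩ := mem_zpowers_iff_nat.mp hxG
      rw [tr_pow, hpow] at hj
      obtain ⟨hu, -⟩ := aff_inj hj
      have hdvd : 2^(n-2-t) ∣ k := horder ▸ orderOf_dvd_of_pow_eq_one hu.symm
      obtain ⟨q, rfl⟩ := hdvd
      rw [Subgroup.mem_zpowers_iff]
      refine ⟨(q:ℤ) * g, ?_⟩
      rw [tr_zpow, pow_mul, hr2a, tr_pow]
      congr 1
      rw [zsmul_eq_mul, nsmul_eq_mul]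
      push_cast
      ring
    · rw [Subgroup.zpowers_le, Subgroup.mem_inf]
      constructor
      · obtain ⟨α, β, hαβ⟩ := odd_isCoprime_two_pow hgodd (t+2)
        have key : (β * (2^(n-2-t) * g) : ℤ) = 2^(n-2-t) + (-α) * 2^n := by
          linear_combination ((2:ℤ)^(n-2-t)) * hαβ + α * hsplit
        have hδ : ((aff (2^n) w 1)^(2^(n-2-t)))^β
            = aff (2^n) 1 ((2 ^ (n - 2 - t) : ℕ) : ZMod (2 ^ n)) := by
          rw [hr2a, tr_zpow]
          congr 1
          rw [zsmul_eq_mul, ← Int.cast_natCast, ← Int.cast_mul, key]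
          push_cast
          rw [hcast0]
          ring
        exact hδ ▸ Subgroup.zpow_mem _ (Subgroup.pow_mem _ (Subgroup.mem_zpowers _) _) _
      · rw [Subgroup.mem_zpowers_iff]
        refine ⟨(2^(n-2-t) : ℕ), ?_⟩
        rw [zpow_natCast, tr_pow, nsmul_eq_mul, mul_one]
  refine ⟨?_, hpart2⟩
  constructor
  · -- normal → t = n - 3
    intro hnorm
    by_contra hne
    have ha2 : 2 ≤ n - 2 - t := by omega
    have hmem : aff (2^n) (-1) 0 ∈ Subgroup.closure
        (Set.range fun p : (ZMod (2 ^ n))ˣ × ZMod (2 ^ n) => aff (2 ^ n) p.1 p.2) :=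
      Subgroup.subset_closure ⟨((-1 : (ZMod (2^n))ˣ), 0), rfl⟩
    have hinvneg : ((-1 : (ZMod (2^n))ˣ))⁻¹ = -1 := by
      rw [inv_eq_iff_mul_eq_one]
      simp
    have hconj : aff (2^n) (-1) 0 * aff (2^n) w 1 * (aff (2^n) (-1) 0)⁻¹
        = aff (2^n) w (-1) := by
      have hmul : aff (2^n) (-1) 0 * aff (2^n) w 1
          = aff (2^n) w (-1) * aff (2^n) (-1) 0 := by
        rw [aff_mul, aff_mul]
        congr 1
        · exact mul_comm _ _
        · rw [hinvneg]
          simp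
      rw [hmul, mul_inv_cancel_right]
    have hRmem := hnorm (aff (2^n) (-1) 0) hmem (aff (2^n) w 1) (Subgroup.mem_zpowers _)
    rw [hconj] at hRmem
    obtain ⟨k, hk⟩ := mem_zpowers_iff_nat.mp hRmem
    have hk' := hk
    rw [hpow] at hk'
    obtain ⟨hu, -⟩ := aff_inj hk'
    rcases Nat.eq_zero_or_pos k with hk0 | hk1
    · subst hk0
      rw [pow_zero] at hu
      have h1 : orderOf w = 1 := orderOf_eq_one_iff.mpr hu.symm
      rw [horder] at h1
      have h2 := Nat.one_lt_two_pow_iff.mpr (show n - 2 - t ≠ 0 from by omega)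
      omega
    · have hk1' : w^(k-1) = 1 := by
        have hpk : w^(k-1) * w = w^k := by
          rw [← pow_succ, show k-1+1 = k from by omega]
        have hcan : w^(k-1) * w = 1 * w := by rw [hpk, hu, one_mul]
        exact mul_right_cancel hcan
      have hdvd : 2^(n-2-t) ∣ k - 1 := horder ▸ orderOf_dvd_of_pow_eq_one hk1'
      obtain ⟨q, hq⟩ := hdvd
      have hkeq : k = 1 + 2^(n-2-t) * q := by omega
      have hrk : (aff (2^n) w 1)^k
          = aff (2^n) w (q • (((2^(n-2-t) * g : ℤ)) : ZMod (2^n)) + 1) := by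
        rw [hkeq, pow_add, pow_mul, pow_one, hr2a, tr_pow, aff_mul]
        congr 1
        · rw [mul_one]
        · simp
      rw [hrk] at hk
      obtain ⟨-, hb2⟩ := aff_inj hk
      have h0 : (((q : ℤ) * (2^(n-2-t) * g) + 2 : ℤ) : ZMod (2^n)) = 0 := by
        rw [nsmul_eq_mul] at hb2
        push_cast at hb2 ⊢
        linear_combination hb2
      have hdvd2 := (ZMod.intCast_zmod_eq_zero_iff_dvd _ (2^n)).mp h0
      have h4n : (4:ℤ) ∣ ((2^n : ℕ) : ℤ) := by
        push_cast
        calc (4:ℤ) = 2^2 := by norm_num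
        _ ∣ 2^n := pow_dvd_pow 2 (by omega)
      have h4a : (4:ℤ) ∣ ((q : ℤ) * (2^(n-2-t) * g)) := by
        have h42 : (4:ℤ) ∣ 2^(n-2-t) := by
          calc (4:ℤ) = 2^2 := by norm_num
          _ ∣ 2^(n-2-t) := pow_dvd_pow 2 (by omega)
        exact ((h42.mul_right g).mul_left (q : ℤ))
      have h42' : (4:ℤ) ∣ 2 := by
        have hx := dvd_sub (h4n.trans hdvd2) h4a
        simpa using hx
      norm_num at h42'
  · -- t = n - 3 → normal
    intro hteq
    have ha1' : n - 2 - t = 1 := by omega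
    have hw2 : w^2 = 1 := by
      have h := hwm
      rw [ha1', pow_one] at h
      exact h
    have hwinv : w⁻¹ = w := by
      rw [inv_eq_iff_mul_eq_one, ← sq]
      exact hw2
    obtain ⟨dd, hdd, hddeq⟩ := five_two_pow t
    have hsplit2 : (2:ℤ)^n = 2^(n-1) * 2 := by
      rw [← pow_succ, show n-1+1 = n from by omega]
    have hWE : (↑w : ZMod (2^n)) - 1 = 2 * (((2^(n-2) * dd : ℤ)) : ZMod (2^n)) := by
      have hc := congrArg (fun z : ℤ => (z : ZMod (2^n))) hddeq
      push_cast at hc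
      rw [hwv, hc, show t+2 = (n-2)+1 from by omega, pow_succ]
      push_cast
      ring
    obtain ⟨α, β, hαβ⟩ := odd_isCoprime_two_pow hgodd (n-1)
    have hgen : ∀ (v : (ZMod (2^n))ˣ) (c : ZMod (2^n)),
        aff (2^n) v c * aff (2^n) w 1 * (aff (2^n) v c)⁻¹
          ∈ Subgroup.zpowers (aff (2^n) w 1) := by
      intro v c
      have hconj : aff (2^n) v c * aff (2^n) w 1 * (aff (2^n) v c)⁻¹
          = aff (2^n) w (↑v * (1 + c * ((↑w : ZMod (2^n)) - 1))) := by
        have hmul : aff (2^n) v c * aff (2^n) w 1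
            = aff (2^n) w (↑v * (1 + c * ((↑w : ZMod (2^n)) - 1))) * aff (2^n) v c := by
          rw [aff_mul, aff_mul]
          congr 1
          · exact mul_comm _ _
          · rw [hwinv]
            linear_combination (-(1 + c*((w:ZMod (2^n)) - 1))) * v.mul_inv
        rw [hmul, mul_inv_cancel_right]
      rw [hconj]
      obtain ⟨y, hy⟩ := unit_odd (by omega) v
      set s : ZMod (2^n) := y + (1+2*y) * c * (((2^(n-2) * dd : ℤ)) : ZMod (2^n)) with hs
      have hbs : (↑v : ZMod (2^n)) * (1 + c * ((↑w : ZMod (2^n)) - 1)) = 1 + 2 * s := by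
        rw [hy, hWE, hs]
        ring
      obtain ⟨sz, hsz⟩ := ZMod.intCast_surjective s
      have hintz : (β * sz * (2^(n-2-t) * g) : ℤ) = 2 * sz + (- sz * α) * 2^n := by
        rw [ha1']
        linear_combination (2 * sz) * hαβ + (sz * α) * hsplit2
      have hcc := congrArg (fun z : ℤ => (z : ZMod (2^n))) hintz
      push_cast at hcc
      have helem : aff (2^n) w (↑v * (1 + c * ((↑w : ZMod (2^n)) - 1)))
          = aff (2^n) w 1 * ((aff (2^n) w 1)^(2^(n-2-t)))^(β * sz) := by
        rw [hr2a, tr_zpow, aff_mul]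
        congr 1
        · rw [mul_one]
        · rw [hbs]
          simp only [inv_one, Units.val_one, mul_one]
          rw [zsmul_eq_mul]
          push_cast
          linear_combination (-1 : ZMod (2^n)) * hcc - 2 * hsz + (((sz : ZMod (2^n))) * α) * hcast0
      rw [helem]
      exact Subgroup.mul_mem _ (Subgroup.mem_zpowers _)
        (Subgroup.zpow_mem _ (Subgroup.pow_mem _ (Subgroup.mem_zpowers _) _) _)
    have key : ∀ (v : (ZMod (2^n))ˣ) (c : ZMod (2^n)),
        ∀ x ∈ Subgroup.zpowers (aff (2^n) w 1),
          (aff (2^n) v c) * x * (aff (2^n) v c)⁻¹ ∈ Subgroup.zpowers (aff (2^n) w 1) := by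
      intro v c x hx
      obtain ⟨z, rfl⟩ := Subgroup.mem_zpowers_iff.mp hx
      rw [← conj_zpow]
      exact Subgroup.zpow_mem _ (hgen v c) z
    intro h hH x hx
    have hle : Subgroup.closure
        (Set.range fun p : (ZMod (2 ^ n))ˣ × ZMod (2 ^ n) => aff (2 ^ n) p.1 p.2)
          ≤ Subgroup.setNormalizer ((Subgroup.zpowers (aff (2^n) w 1) : Subgroup _) : Set _) := by
      rw [Subgroup.closure_le]
      rintro p ⟨⟨v, c⟩, rfl⟩
      exact Subgroup.mem_normalizer_fintype (fun x hx => key v c x hx)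
    exact (hle hH x).mp hx
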